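/- Let d ≥ 5, let δ be an integer with 1 ≤ δ ≤ d − δ, and set m = d − δ. Let Z = (z_{ij})_{1≤i≤δ, 1≤j≤m} be a matrix of indeterminates. Set A = O[z_{ij}] / (I₂(Z) + (T'(Z) + 4π)) and A₊ = O[z_{ij}] / (I₂(Z) + ((T'(Z) + 4π)·z_{ij} : all i,j)). Let φ : A → k be the O-algebra map sending every z_{ij} to 0 (well-defined since A modulo all z_{ij} is O/(4π) ≅ k) and let ψ : O → k be the residue map. Then the O-algebra map A₊ → A × O, whose first component is the canonical surjection and whose second component sends every z_{ij} to 0, is injective with image exactly the fiber product {(a, c) ∈ A × O : φ(a) = ψ(c)}; in particular A₊ ≅ A ×_k O. -/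

import Mathlib

open MvPolynomial

noncomputable section

/-- The ideal `I₂(Z)` generated by all `2 × 2` minors of the matrix of indeterminates. -/
def minors2 (O : Type*) [CommRing O] (δ m : ℕ) : Ideal (MvPolynomial (Fin δ × Fin m) O) :=
  Ideal.span {f | ∃ (i i' : Fin δ) (j j' : Fin m),
    f = X (i, j) * X (i', j') - X (i, j') * X (i', j)}

/-- The quadratic polynomial `T'(Z) = Σᵢ Σⱼ z_{i,m+1-j} z_{δ+1-i,j}`. -/
def Tpoly (O : Type*) [CommRing O] (δ m : ℕ) : MvPolynomial (Fin δ × Fin m) O :=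
  ∑ i : Fin δ, ∑ j : Fin m, X (i, j.rev) * X (i.rev, j)

/-- The ideal defining `A`: `I₂(Z) + (T'(Z) + 4π)`. -/
def idealA (O : Type*) [CommRing O] (π : O) (δ m : ℕ) :
    Ideal (MvPolynomial (Fin δ × Fin m) O) :=
  minors2 O δ m + Ideal.span {Tpoly O δ m + C (4 * π)}

/-- The ideal defining `A₊`: `I₂(Z) + ((T'(Z) + 4π)·z_{ij} : all i, j)`. -/
def idealAplus (O : Type*) [CommRing O] (π : O) (δ m : ℕ) :
    Ideal (MvPolynomial (Fin δ × Fin m) O) :=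
  minors2 O δ m +
    Ideal.span (Set.range fun ij : Fin δ × Fin m => (Tpoly O δ m + C (4 * π)) * X ij)

section Aux

variable {R : Type*} [CommRing R] {σ : Type*}

theorem aux_sub_C_mem (c : MvPolynomial σ R) :
    c - C (constantCoeff c) ∈ Ideal.span (Set.range (X (R := R) (σ := σ))) := by
  induction c using MvPolynomial.induction_on with
  | C a => simp
  | add p q hp hq =>
      have : p + q - C (constantCoeff (p + q)) =
          (p - C (constantCoeff p)) + (q - C (constantCoeff q)) := by
        rw [map_add, map_add]; ring
      rw [this]; exact Ideal.add_mem _ hp hq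
  | mul_X p n hp =>
      rw [map_mul, constantCoeff_X, mul_zero, map_zero, sub_zero]
      exact Ideal.mul_mem_left _ _ (Ideal.subset_span ⟨n, rfl⟩)

theorem aux_cc_minors {O : Type*} [CommRing O] {δ m : ℕ}
    {q : MvPolynomial (Fin δ × Fin m) O} (hq : q ∈ minors2 O δ m) :
    constantCoeff q = 0 := by
  have : minors2 O δ m ≤ RingHom.ker (constantCoeff (R := O) (σ := Fin δ × Fin m)) := by
    rw [minors2, Ideal.span_le]
    rintro f ⟨i, i', j, j', rfl⟩
    simp [RingHom.mem_ker]
  exact this hq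

theorem aux_cc_Tpoly (O : Type*) [CommRing O] (δ m : ℕ) :
    constantCoeff (Tpoly O δ m) = 0 := by
  simp [Tpoly]

theorem aux_plus_le {O : Type*} [CommRing O] (π : O) (δ m : ℕ) :
    idealAplus O π δ m ≤ idealA O π δ m := by
  rw [idealAplus, idealA]
  apply sup_le le_sup_left
  rw [Ideal.span_le]
  rintro f ⟨ij, rfl⟩
  exact Submodule.mem_sup_right (Ideal.mem_span_singleton'.mpr ⟨X ij, mul_comm _ _⟩)

theorem aux_mem_plus {O : Type*} [CommRing O] [IsDomain O] {π : O} {δ m : ℕ}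
    (h4 : (4 : O) * π ≠ 0) {q : MvPolynomial (Fin δ × Fin m) O}
    (h1 : q ∈ idealA O π δ m) (h2 : constantCoeff q = 0) :
    q ∈ idealAplus O π δ m := by
  rw [idealA] at h1
  obtain ⟨a, ha, b, hb, rfl⟩ := Submodule.mem_sup.mp h1
  obtain ⟨c, rfl⟩ := Ideal.mem_span_singleton'.mp hb
  have hccb : constantCoeff (c * (Tpoly O δ m + C (4 * π))) = constantCoeff c * (4 * π) := by
    rw [map_mul, map_add, aux_cc_Tpoly, constantCoeff_C, zero_add]
  have hcc : constantCoeff c = 0 := by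
    have h0 : constantCoeff c * (4 * π) = 0 := by
      have := h2
      rw [map_add, aux_cc_minors ha, zero_add, hccb] at this
      exact this
    rcases mul_eq_zero.mp h0 with h | h
    · exact h
    · exact absurd h h4
  have hcX : c ∈ Ideal.span (Set.range (X (R := O) (σ := Fin δ × Fin m))) := by
    have := aux_sub_C_mem c
    rwa [hcc, map_zero, sub_zero] at this
  rw [idealAplus]
  refine Submodule.add_mem_sup ha ?_
  set J := Ideal.span (Set.range fun ij : Fin δ × Fin m =>
    (Tpoly O δ m + C (4 * π)) * X ij) with hJ
  refine Submodule.span_induction (p := fun c _ => c * (Tpoly O δ m + C (4 * π)) ∈ J)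
    ?_ ?_ ?_ ?_ hcX
  · rintro x ⟨ij, rfl⟩
    exact Ideal.subset_span ⟨ij, (mul_comm _ _)⟩
  · simp
  · intro x y _ _ hx hy
    rw [add_mul]; exact Ideal.add_mem _ hx hy
  · intro r x _ hx
    rw [smul_eq_mul, mul_assoc]; exact Ideal.mul_mem_left _ _ hx

end Aux

/-- the `O`-algebra map `A₊ → A × O` (first component the canonical
surjection, second component killing all the `z_{ij}`) is injective, with image exactly
the fiber product `{(a, c) : φ a = ψ c}`, where `φ : A → k` is the `O`-algebra map killing
all the `z_{ij}` and `ψ : O → k` is the residue map; in particular `A₊ ≅ A ×ₖ O`. -/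
theorem stmt_7 (O : Type*) [CommRing O] [IsDomain O] [IsDiscreteValuationRing O]
    [IsAdicComplete (IsLocalRing.maximalIdeal O) O]
    (p : ℕ) [Fact p.Prime] (hp : p ≠ 2)
    [IsAlgClosed (IsLocalRing.ResidueField O)] [CharP (IsLocalRing.ResidueField O) p]
    (π : O) (hπ : Irreducible π)
    (d δ : ℕ) (hd : 5 ≤ d) (hδ1 : 1 ≤ δ) (hδ2 : δ ≤ d - δ)
    -- the `O`-algebra map `φ : A → k` sending every `z_{ij}` to `0`
    (φ : (MvPolynomial (Fin δ × Fin (d - δ)) O ⧸ idealA O π δ (d - δ)) →ₐ[O]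
      IsLocalRing.ResidueField O)
    (hφ : ∀ ij : Fin δ × Fin (d - δ), φ (Ideal.Quotient.mk (idealA O π δ (d - δ)) (X ij)) = 0)
    -- the canonical surjection `f : A₊ → A`
    (f : (MvPolynomial (Fin δ × Fin (d - δ)) O ⧸ idealAplus O π δ (d - δ)) →ₐ[O]
      (MvPolynomial (Fin δ × Fin (d - δ)) O ⧸ idealA O π δ (d - δ)))
    (hf : ∀ q : MvPolynomial (Fin δ × Fin (d - δ)) O,
      f (Ideal.Quotient.mk (idealAplus O π δ (d - δ)) q) =
        Ideal.Quotient.mk (idealA O π δ (d - δ)) q)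
    -- the `O`-algebra map `g : A₊ → O` sending every `z_{ij}` to `0`
    (g : (MvPolynomial (Fin δ × Fin (d - δ)) O ⧸ idealAplus O π δ (d - δ)) →ₐ[O] O)
    (hg : ∀ ij : Fin δ × Fin (d - δ),
      g (Ideal.Quotient.mk (idealAplus O π δ (d - δ)) (X ij)) = 0) :
    Function.Injective
      (fun a : MvPolynomial (Fin δ × Fin (d - δ)) O ⧸ idealAplus O π δ (d - δ) =>
        (f a, g a)) ∧
    Set.range
      (fun a : MvPolynomial (Fin δ × Fin (d - δ)) O ⧸ idealAplus O π δ (d - δ) =>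
        (f a, g a)) =
      {ac : (MvPolynomial (Fin δ × Fin (d - δ)) O ⧸ idealA O π δ (d - δ)) × O |
        φ ac.1 = IsLocalRing.residue O ac.2} := by
  -- 4 is a unit in O
  have hres4 : IsLocalRing.residue O (4 : O) ≠ 0 := by
    have : ((4 : ℕ) : IsLocalRing.ResidueField O) ≠ 0 := by
      rw [Ne, CharP.cast_eq_zero_iff (IsLocalRing.ResidueField O) p]
      intro h
      have hp2 : p ∣ 2 := (Fact.out : p.Prime).dvd_of_dvd_pow (n := 2) (by norm_num [pow_two]; omega)
      have h2 := Nat.le_of_dvd (by norm_num) hp2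
      have h3 := (Fact.out : p.Prime).two_le
      omega
    have h4 : IsLocalRing.residue O (4 : O) = ((4 : ℕ) : IsLocalRing.ResidueField O) := by
      push_cast
      simp [map_ofNat]
    rw [h4]; exact this
  have hu4 : IsUnit (4 : O) := by
    by_contra h
    exact hres4 (Ideal.Quotient.eq_zero_iff_mem.mpr ((IsLocalRing.mem_maximalIdeal _).mpr h))
  have h4π : (4 : O) * π ≠ 0 :=
    mul_ne_zero (fun h => hres4 (by rw [h, map_zero])) hπ.ne_zero
  -- g ∘ mk computes the constant coefficient
  have hgq : ∀ q : MvPolynomial (Fin δ × Fin (d - δ)) O,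
      g (Ideal.Quotient.mk (idealAplus O π δ (d - δ)) q) = constantCoeff q := by
    have hcomp : g.comp (Ideal.Quotient.mkₐ O (idealAplus O π δ (d - δ))) =
        aeval (fun _ : Fin δ × Fin (d - δ) => (0 : O)) := by
      apply MvPolynomial.algHom_ext
      intro ij
      simp only [AlgHom.comp_apply, Ideal.Quotient.mkₐ_eq_mk, aeval_X]
      exact hg ij
    intro q
    have := congrArg (fun h => h q) (congrArg DFunLike.coe hcomp)
    simpa using this
  -- φ ∘ mk computes the residue of the constant coefficient
  have hφq : ∀ q : MvPolynomial (Fin δ × Fin (d - δ)) O,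
      φ (Ideal.Quotient.mk (idealA O π δ (d - δ)) q) =
        IsLocalRing.residue O (constantCoeff q) := by
    have hcomp : φ.comp (Ideal.Quotient.mkₐ O (idealA O π δ (d - δ))) =
        aeval (fun _ : Fin δ × Fin (d - δ) => (0 : IsLocalRing.ResidueField O)) := by
      apply MvPolynomial.algHom_ext
      intro ij
      simp only [AlgHom.comp_apply, Ideal.Quotient.mkₐ_eq_mk, aeval_X]
      exact hφ ij
    intro q
    have := congrArg (fun h => h q) (congrArg DFunLike.coe hcomp)
    simp only [AlgHom.comp_apply, Ideal.Quotient.mkₐ_eq_mk, aeval_zero'] at this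
    rw [this, ← IsLocalRing.ResidueField.algebraMap_eq]
  constructor
  · -- injectivity
    intro a b hab
    obtain ⟨q, rfl⟩ := Ideal.Quotient.mk_surjective a
    obtain ⟨q', rfl⟩ := Ideal.Quotient.mk_surjective b
    simp only [Prod.mk.injEq] at hab
    obtain ⟨h1, h2⟩ := hab
    rw [hf, hf] at h1
    rw [hgq, hgq] at h2
    have hmem : q - q' ∈ idealA O π  δ (d - δ) := Ideal.Quotient.eq.mp h1
    have hcc : constantCoeff (q - q') = 0 := by rw [map_sub, h2, sub_self]
    exact Ideal.Quotient.eq.mpr (aux_mem_plus h4π hmem hcc)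
  · -- range
    ext ⟨a, c⟩
    simp only [Set.mem_range, Set.mem_setOf_eq, Prod.mk.injEq]
    constructor
    · rintro ⟨x, hx1, hx2⟩
      obtain ⟨q, rfl⟩ := Ideal.Quotient.mk_surjective x
      rw [hf] at hx1
      rw [hgq] at hx2
      rw [← hx1, ← hx2, hφq]
    · rintro hac
      obtain ⟨q, rfl⟩ := Ideal.Quotient.mk_surjective a
      rw [hφq] at hac
      have hmem : c - constantCoeff q ∈ IsLocalRing.maximalIdeal O := by
        rw [← Ideal.Quotient.eq_zero_iff_mem]
        show IsLocalRing.residue O _ = 0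
        rw [map_sub, ← hac, sub_self]
      rw [hπ.maximalIdeal_eq, Ideal.mem_span_singleton'] at hmem
      obtain ⟨t, ht⟩ := hmem
      set u := hu4.unit with hu
      set e : O := ((u⁻¹ : Oˣ) : O) with he
      have he4 : e * 4 = 1 := by
        rw [he]
        have : ((u : Oˣ) : O) = (4 : O) := hu4.unit_spec
        rw [← this]
        exact u.inv_mul
      refine ⟨Ideal.Quotient.mk (idealAplus O π δ (d - δ))
        (q + C (t * e) * (Tpoly O δ (d - δ) + C (4 * π))), ?_, ?_⟩
      · rw [hf]
        refine (Ideal.Quotient.eq.mpr ?_).symm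
        have : q - (q + C (t * e) * (Tpoly O δ (d - δ) + C (4 * π))) =
            -(C (t * e) * (Tpoly O δ (d - δ) + C (4 * π))) := by ring
        rw [idealA, this]
        refine neg_mem (Submodule.mem_sup_right ?_)
        exact Ideal.mem_span_singleton'.mpr ⟨C (t * e), rfl⟩
      · rw [hgq]
        rw [map_add, map_mul, map_add, aux_cc_Tpoly, constantCoeff_C, constantCoeff_C,
          zero_add]
        have : t * e * (4 * π) = (e * 4) * (t * π) := by ring
        rw [this, he4, one_mul, ht]
        ring
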